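/- arXiv:1605.09557 — 8 statements merged into one kernel-verified Lean document; each statement's English description precedes it below -/
import Mathlib

section
/- Let X₁, X₂, X₃ be nonempty standard Borel spaces, let μ₁, μ₂, μ₃ be Borel probability measures on X₁, X₂, X₃ respectively, let R₁₂ ⊆ X₁ × X₂ and R₂₃ ⊆ X₂ × X₃ be Borel measurable relations, and let δ_a, δ_b ∈ [0,1]. Suppose there exists a coupling W₁₂ of μ₁ and μ₂ with W₁₂(R₁₂) ≥ 1 − δ_a, and a coupling W₂₃ of μ₂ and μ₃ with W₂₃(R₂₃) ≥ 1 − δ_b. Then there exists a coupling W₁₃ of μ₁ and μ₃ such that W₁₃({(x₁,x₃) | ∃ x₂ ∈ X₂, (x₁,x₂) ∈ R₁₂ ∧ (x₂,x₃) ∈ R₂₃}) ≥ 1 − δ_a − δ_b. -/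
/-!
Glue the two couplings along `X₂`: disintegrate `W₂₃` over its first coordinate and, given a
sample `(x₁, x₂)` of `W₁₂`, draw `x₃` from the conditional law of `W₂₃` given `x₂`. The
resulting law on `(X₁ × X₂) × X₃` has `W₁₂` and `W₂₃` as its two-dimensional marginals, so by
the union bound the events `(x₁, x₂) ∈ R₁₂` and `(x₂, x₃) ∈ R₂₃` hold simultaneously with
probability at least `1 - δa - δb`, and `x₂` then witnesses that `(x₁, x₃)` lies in the
composite relation.
-/

open MeasureTheory ProbabilityTheory

/-- `W` is a coupling of `μ` and `ν`: a probability measure on the product whose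
marginals are `μ` and `ν`. -/
def IsCoupling {X₁ X₂ : Type*} [MeasurableSpace X₁] [MeasurableSpace X₂]
    (W : Measure (X₁ × X₂)) (μ : Measure X₁) (ν : Measure X₂) : Prop :=
  IsProbabilityMeasure W ∧ W.map Prod.fst = μ ∧ W.map Prod.snd = ν

namespace MeasureTheory.Measure

variable {α β γ : Type*} [MeasurableSpace α] [MeasurableSpace β] [MeasurableSpace γ]

lemma map_prodMap_compProd_comap (μ : Measure α) [SFinite μ] (κ : Kernel β γ)
    [IsSFiniteKernel κ] {f : α → β} (hf : Measurable f) :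
    (μ ⊗ₘ κ.comap f hf).map (Prod.map f id) = μ.map f ⊗ₘ κ := by
  ext s hs
  rw [map_apply (by fun_prop) hs, compProd_apply (hs.preimage (by fun_prop)),
    compProd_apply hs, lintegral_map (Kernel.measurable_kernel_prodMk_left hs) hf]
  rfl

end MeasureTheory.Measure

section Gluing

variable {X₁ X₂ X₃ : Type*} [MeasurableSpace X₁] [MeasurableSpace X₂] [MeasurableSpace X₃]
  [StandardBorelSpace X₃] [Nonempty X₃]

noncomputable def gluing (W₁₂ : Measure (X₁ × X₂)) (W₂₃ : Measure (X₂ × X₃))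
    [IsFiniteMeasure W₂₃] : Measure ((X₁ × X₂) × X₃) :=
  W₁₂ ⊗ₘ W₂₃.condKernel.comap Prod.snd measurable_snd

variable (W₁₂ : Measure (X₁ × X₂)) (W₂₃ : Measure (X₂ × X₃)) [IsFiniteMeasure W₂₃]

instance [IsProbabilityMeasure W₁₂] : IsProbabilityMeasure (gluing W₁₂ W₂₃) := by
  unfold gluing; infer_instance

lemma fst_gluing [SFinite W₁₂] : (gluing W₁₂ W₂₃).fst = W₁₂ :=
  Measure.fst_compProd _ _

lemma map_prodMap_snd_gluing [SFinite W₁₂] (h : W₁₂.snd = W₂₃.fst) :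
    (gluing W₁₂ W₂₃).map (Prod.map Prod.snd id) = W₂₃ := by
  rw [gluing, Measure.map_prodMap_compProd_comap, ← Measure.snd, h, Measure.disintegrate]

end Gluing

section UnionBound

variable {Ω : Type*} [MeasurableSpace Ω] {P : Measure Ω} [IsProbabilityMeasure P] {s t : Set Ω}

lemma prob_compl_le_of_one_sub_le (hs : MeasurableSet s) {ε : ENNReal} (h : 1 - ε ≤ P s) :
    P sᶜ ≤ ε := by
  rw [prob_compl_eq_one_sub hs]
  exact tsub_le_iff_tsub_le.1 h

lemma one_sub_add_le_prob_inter (hs : MeasurableSet s) (ht : MeasurableSet t) {a b : ENNReal}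
    (ha : P sᶜ ≤ a) (hb : P tᶜ ≤ b) : 1 - (a + b) ≤ P (s ∩ t) := by
  rw [tsub_le_iff_tsub_le, ← prob_compl_eq_one_sub (hs.inter ht), Set.compl_inter]
  exact (measure_union_le _ _).trans (add_le_add ha hb)

end UnionBound

theorem liftedRel_comp_general
    {X₁ X₂ X₃ : Type*}
    [MeasurableSpace X₁]
    [MeasurableSpace X₂]
    [MeasurableSpace X₃] [StandardBorelSpace X₃] [Nonempty X₃]
    (μ₁ : Measure X₁) (μ₂ : Measure X₂) (μ₃ : Measure X₃)
    (R₁₂ : Set (X₁ × X₂)) (hR₁₂ : MeasurableSet R₁₂)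
    (R₂₃ : Set (X₂ × X₃)) (hR₂₃ : MeasurableSet R₂₃)
    (δa δb : ℝ) (hδa0 : 0 ≤ δa) (hδb0 : 0 ≤ δb)
    (W₁₂ : Measure (X₁ × X₂)) (hW₁₂ : IsCoupling W₁₂ μ₁ μ₂)
    (hW₁₂R : 1 - ENNReal.ofReal δa ≤ W₁₂ R₁₂)
    (W₂₃ : Measure (X₂ × X₃)) (hW₂₃ : IsCoupling W₂₃ μ₂ μ₃)
    (hW₂₃R : 1 - ENNReal.ofReal δb ≤ W₂₃ R₂₃) :
    ∃ W₁₃ : Measure (X₁ × X₃), IsCoupling W₁₃ μ₁ μ₃ ∧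
      1 - ENNReal.ofReal (δa + δb) ≤
        W₁₃ {p : X₁ × X₃ | ∃ x₂ : X₂, (p.1, x₂) ∈ R₁₂ ∧ (x₂, p.2) ∈ R₂₃} := by
  obtain ⟨_, hμ₁, hμ₂⟩ := hW₁₂
  obtain ⟨_, hμ₂', hμ₃⟩ := hW₂₃
  set W := gluing W₁₂ W₂₃
  have hW₁₂ : W.fst = W₁₂ := fst_gluing W₁₂ W₂₃
  have hW₂₃ : W.map (Prod.map Prod.snd id) = W₂₃ :=
    map_prodMap_snd_gluing W₁₂ W₂₃ (by rw [Measure.snd, Measure.fst, hμ₂, hμ₂'])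
  have hproj : Measurable (Prod.map Prod.fst id : (X₁ × X₂) × X₃ → X₁ × X₃) := by fun_prop
  refine ⟨W.map (Prod.map Prod.fst id), ⟨Measure.isProbabilityMeasure_map hproj.aemeasurable, ?_, ?_⟩, ?_⟩
  · rw [Measure.map_map measurable_fst hproj, ← hμ₁, ← hW₁₂, Measure.fst,
      Measure.map_map measurable_fst measurable_fst]
    rfl
  · rw [Measure.map_map measurable_snd hproj, ← hμ₃, ← hW₂₃,
      Measure.map_map measurable_snd (by fun_prop)]
    rfl
  have hgood : 1 - ENNReal.ofReal (δa + δb) ≤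
      W (Prod.fst ⁻¹' R₁₂ ∩ Prod.map Prod.snd id ⁻¹' R₂₃) := by
    rw [ENNReal.ofReal_add hδa0 hδb0]
    refine one_sub_add_le_prob_inter (hR₁₂.preimage measurable_fst)
      (hR₂₃.preimage (measurable_snd.prodMap measurable_id)) ?_ ?_
    · rw [← Set.preimage_compl, ← Measure.fst_apply hR₁₂.compl, hW₁₂]
      exact prob_compl_le_of_one_sub_le hR₁₂ hW₁₂R
    · rw [← Set.preimage_compl, ← Measure.map_apply (by fun_prop) hR₂₃.compl, hW₂₃]
      exact prob_compl_le_of_one_sub_le hR₂₃ hW₂₃R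
  refine hgood.trans ((measure_mono ?_).trans (Measure.le_map_apply hproj.aemeasurable _))
  exact fun p hp ↦ ⟨p.1.2, hp⟩

/-- Composition of approximate liftings: couplings through the composite relation
with additive error in the probability deviations. -/
theorem liftedRel_comp
    {X₁ X₂ X₃ : Type*}
    [MeasurableSpace X₁] [StandardBorelSpace X₁] [Nonempty X₁]
    [MeasurableSpace X₂] [StandardBorelSpace X₂] [Nonempty X₂]
    [MeasurableSpace X₃] [StandardBorelSpace X₃] [Nonempty X₃]
    (μ₁ : Measure X₁) (μ₂ : Measure X₂) (μ₃ : Measure X₃)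
    [IsProbabilityMeasure μ₁] [IsProbabilityMeasure μ₂] [IsProbabilityMeasure μ₃]
    (R₁₂ : Set (X₁ × X₂)) (hR₁₂ : MeasurableSet R₁₂)
    (R₂₃ : Set (X₂ × X₃)) (hR₂₃ : MeasurableSet R₂₃)
    (δa δb : ℝ) (hδa0 : 0 ≤ δa) (hδa1 : δa ≤ 1) (hδb0 : 0 ≤ δb) (hδb1 : δb ≤ 1)
    (W₁₂ : Measure (X₁ × X₂)) (hW₁₂ : IsCoupling W₁₂ μ₁ μ₂)
    (hW₁₂R : 1 - ENNReal.ofReal δa ≤ W₁₂ R₁₂)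
    (W₂₃ : Measure (X₂ × X₃)) (hW₂₃ : IsCoupling W₂₃ μ₂ μ₃)
    (hW₂₃R : 1 - ENNReal.ofReal δb ≤ W₂₃ R₂₃) :
    ∃ W₁₃ : Measure (X₁ × X₃), IsCoupling W₁₃ μ₁ μ₃ ∧
      1 - ENNReal.ofReal (δa + δb) ≤
        W₁₃ {p : X₁ × X₃ | ∃ x₂ : X₂, (p.1, x₂) ∈ R₁₂ ∧ (x₂, p.2) ∈ R₂₃} :=
  liftedRel_comp_general μ₁ μ₂ μ₃ R₁₂ hR₁₂ R₂₃ hR₂₃ δa δb hδa0 hδb0 W₁₂ hW₁₂ hW₁₂R W₂₃ hW₂₃ hW₂₃R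
end

section
/- Let X₁, X₂, Q be nonempty standard Borel spaces, let f₁ : X₁ → Q and f₂ : X₂ → Q be measurable surjections, let Δ, Θ be Borel probability measures on X₁, X₂ respectively, and let δ ∈ [0,1]. Then the following are equivalent: (i) for every measurable set B ⊆ Q, Δ(f₁⁻¹(B)) ≤ Θ(f₂⁻¹(B)) + δ and Θ(f₂⁻¹(B)) ≤ Δ(f₁⁻¹(B)) + δ; (ii) there exists a coupling W of Δ and Θ with W({(x₁,x₂) | f₁(x₁) = f₂(x₂)}) ≥ 1 − δ. -/
open MeasureTheory

/-!
(i) ⇒ (ii): by the Hahn decomposition, the pushforwards `μ₁ = f₁₊Δ` and `μ₂ = f₂₊Θ` have a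
common part `ν ≤ μ₁, μ₂` of mass at least `1 - δ`. Disintegrating `Δ` and `Θ` along `f₁` and `f₂`
gives Markov kernels `κᵢ` from `Q` concentrated on the fibres. The coupling is
`(κ₁ ×ₖ κ₂) ∘ₘ ν`, which lives on the relation, plus the normalised product coupling of the
leftovers `κ₁ ∘ₘ (μ₁ - ν)` and `κ₂ ∘ₘ (μ₂ - ν)`, which have equal mass.

(ii) ⇒ (i): off a set of `W`-measure at most `δ`, `x₁ ∈ f₁⁻¹ B ↔ x₂ ∈ f₂⁻¹ B`.
-/

open Set ProbabilityTheory
open scoped ENNReal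

section

variable {X₁ X₂ Q : Type*} [MeasurableSpace X₁] [MeasurableSpace X₂] [MeasurableSpace Q]

lemma measurableSet_setOf_apply_fst_eq_apply_snd [MeasurableEq Q] {f₁ : X₁ → Q} {f₂ : X₂ → Q}
    (hf₁ : Measurable f₁) (hf₂ : Measurable f₂) : MeasurableSet {p : X₁ × X₂ | f₁ p.1 = f₂ p.2} :=
  measurableSet_eq_fun (hf₁.comp measurable_fst) (hf₂.comp measurable_snd)

lemma isCoupling_of_map_fst_of_map_snd {W : Measure (X₁ × X₂)} {μ : Measure X₁}
    {ν : Measure X₂} [IsProbabilityMeasure μ] (h₁ : W.map Prod.fst = μ)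
    (h₂ : W.map Prod.snd = ν) : IsCoupling W μ ν := by
  have : IsProbabilityMeasure (W.map Prod.fst) := h₁ ▸ ‹_›
  exact ⟨Measure.isProbabilityMeasure_of_map Prod.fst, h₁, h₂⟩

lemma IsCoupling.measure_le_add_measure_compl {W : Measure (X₁ × X₂)} {μ : Measure X₁}
    {ν : Measure X₂} (hW : IsCoupling W μ ν) {A : Set X₁} {C : Set X₂} {R : Set (X₁ × X₂)}
    (hA : MeasurableSet A) (hC : MeasurableSet C) (hR : ∀ p ∈ R, (p.1 ∈ A ↔ p.2 ∈ C)) :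
    μ A ≤ ν C + W Rᶜ ∧ ν C ≤ μ A + W Rᶜ := by
  have key {S T : Set (X₁ × X₂)} (hST : S ∩ R ⊆ T) : W S ≤ W T + W Rᶜ :=
    (measure_mono fun p hp => (em (p ∈ R)).imp (fun h => hST ⟨hp, h⟩) id).trans
      (measure_union_le T Rᶜ)
  obtain ⟨-, rfl, rfl⟩ := hW
  rw [Measure.map_apply measurable_fst hA, Measure.map_apply measurable_snd hC]
  exact ⟨key fun p hp => (hR p hp.2).1 hp.1, key fun p hp => (hR p hp.2).2 hp.1⟩

lemma inv_measure_univ_smul_measure_univ_smul (μ : Measure X₁) [IsFiniteMeasure μ] :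
    (μ univ)⁻¹ • μ univ • μ = μ := by
  rcases eq_zero_or_neZero μ with rfl | _
  · simp
  · rw [smul_smul, ENNReal.inv_mul_cancel (NeZero.ne _) (measure_ne_top _ _), one_smul]

lemma exists_map_fst_eq_map_snd_eq {μ : Measure X₁} {ν : Measure X₂} [IsFiniteMeasure μ]
    [IsFiniteMeasure ν] (h : μ univ = ν univ) :
    ∃ W : Measure (X₁ × X₂), W.map Prod.fst = μ ∧ W.map Prod.snd = ν := by
  refine ⟨(μ univ)⁻¹ • μ.prod ν, ?_, ?_⟩
  · rw [Measure.map_smul, Measure.map_fst_prod, ← h, inv_measure_univ_smul_measure_univ_smul]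
  · rw [Measure.map_smul, Measure.map_snd_prod, h, inv_measure_univ_smul_measure_univ_smul]

lemma exists_le_le_measure_univ_le_add {μ₁ μ₂ : Measure Q} [IsFiniteMeasure μ₁]
    [IsFiniteMeasure μ₂] {ε : ℝ≥0∞} (h : ∀ B, MeasurableSet B → μ₁ B ≤ μ₂ B + ε) :
    ∃ ν ≤ μ₁, ν ≤ μ₂ ∧ μ₁ univ ≤ ν univ + ε := by
  obtain ⟨S, hS, hS₂₁, hS₁₂⟩ := hahn_decomposition μ₁ μ₂
  have restrict_le {m₁ m₂ : Measure Q} {T : Set Q} (hT : MeasurableSet T)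
      (hle : ∀ t, MeasurableSet t → t ⊆ T → m₁ t ≤ m₂ t) : m₁.restrict T ≤ m₂.restrict T :=
    Measure.le_iff.2 fun t ht => by
      simpa only [Measure.restrict_apply ht] using hle _ (ht.inter hT) inter_subset_right
  refine ⟨μ₂.restrict S + μ₁.restrict Sᶜ, ?_, ?_, ?_⟩
  · calc μ₂.restrict S + μ₁.restrict Sᶜ ≤ μ₁.restrict S + μ₁.restrict Sᶜ :=
          add_le_add_left (restrict_le hS hS₂₁) _
      _ = μ₁ := Measure.restrict_add_restrict_compl hS
  · calc μ₂.restrict S + μ₁.restrict Sᶜ ≤ μ₂.restrict S + μ₂.restrict Sᶜ :=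
          add_le_add_right (restrict_le hS.compl hS₁₂) _
      _ = μ₂ := Measure.restrict_add_restrict_compl hS
  · calc μ₁ univ = μ₁ S + μ₁ Sᶜ := (measure_add_measure_compl hS).symm
      _ ≤ μ₂ S + ε + μ₁ Sᶜ := add_le_add_left (h S hS) _
      _ = (μ₂.restrict S + μ₁.restrict Sᶜ) univ + ε := by
          simp only [Measure.add_apply, Measure.restrict_apply_univ]; ring

lemma exists_isMarkovKernel_comp_map_eq [MeasurableEq Q] [StandardBorelSpace X₁] [Nonempty X₁]
    {f : X₁ → Q} (hf : Measurable f) (μ : Measure X₁) [IsFiniteMeasure μ] :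
    ∃ κ : Kernel Q X₁, IsMarkovKernel κ ∧ κ ∘ₘ μ.map f = μ ∧
      ∀ᵐ q ∂μ.map f, ∀ᵐ x ∂κ q, f x = q := by
  refine ⟨condDistrib id f μ, inferInstance, ?_, ?_⟩
  · rw [condDistrib_comp_map hf.aemeasurable aemeasurable_id, Measure.map_id]
  · have hgraph : ∀ᵐ p ∂(μ.map f ⊗ₘ condDistrib id f μ), f p.2 = p.1 := by
      rw [compProd_map_condDistrib aemeasurable_id,
        ae_map_iff (hf.prodMk measurable_id).aemeasurable
          (measurableSet_eq_fun (hf.comp measurable_snd) measurable_fst :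
            MeasurableSet {p : Q × X₁ | f p.2 = p.1})]
      exact .of_forall fun _ => rfl
    exact Measure.ae_ae_of_ae_compProd hgraph

lemma prod_comp_apply_setOf_eq [MeasurableEq Q] {f₁ : X₁ → Q} {f₂ : X₂ → Q}
    (hf₁ : Measurable f₁) (hf₂ : Measurable f₂) {κ₁ : Kernel Q X₁} {κ₂ : Kernel Q X₂}
    [IsMarkovKernel κ₁] [IsMarkovKernel κ₂] {ν : Measure Q}
    (h₁ : ∀ᵐ q ∂ν, ∀ᵐ x ∂κ₁ q, f₁ x = q) (h₂ : ∀ᵐ q ∂ν, ∀ᵐ y ∂κ₂ q, f₂ y = q) :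
    ((κ₁ ×ₖ κ₂) ∘ₘ ν) {p | f₁ p.1 = f₂ p.2} = ν univ := by
  have hR := measurableSet_setOf_apply_fst_eq_apply_snd hf₁ hf₂
  have hae : ∀ᵐ p ∂(κ₁ ×ₖ κ₂) ∘ₘ ν, f₁ p.1 = f₂ p.2 := by
    refine Measure.ae_comp_of_ae_ae hR ?_
    filter_upwards [h₁, h₂] with q hq₁ hq₂
    rw [Kernel.prod_apply, Measure.ae_prod_iff_ae_ae hR]
    filter_upwards [hq₁] with x hx
    filter_upwards [hq₂] with y hy
    rw [hx, hy]
  exact (measure_congr (ae_eq_univ.2 hae)).trans Measure.comp_apply_univ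

lemma exists_map_fst_eq_comp_map_snd_eq_comp {μ₁ μ₂ ν : Measure Q} [IsFiniteMeasure μ₁]
    [IsFiniteMeasure μ₂] [IsFiniteMeasure ν] (hν₁ : ν ≤ μ₁) (hν₂ : ν ≤ μ₂)
    (hμ : μ₁ univ = μ₂ univ) (κ₁ : Kernel Q X₁) (κ₂ : Kernel Q X₂) [IsMarkovKernel κ₁]
    [IsMarkovKernel κ₂] :
    ∃ W : Measure (X₁ × X₂), W.map Prod.fst = κ₁ ∘ₘ μ₁ ∧ W.map Prod.snd = κ₂ ∘ₘ μ₂ ∧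
      (κ₁ ×ₖ κ₂) ∘ₘ ν ≤ W := by
  have hmass : (κ₁ ∘ₘ (μ₁ - ν)) univ = (κ₂ ∘ₘ (μ₂ - ν)) univ := by
    rw [Measure.comp_apply_univ, Measure.comp_apply_univ, Measure.sub_apply .univ hν₁,
      Measure.sub_apply .univ hν₂, hμ]
  obtain ⟨W, hW₁, hW₂⟩ := exists_map_fst_eq_map_snd_eq hmass
  refine ⟨(κ₁ ×ₖ κ₂) ∘ₘ ν + W, ?_, ?_, Measure.le_add_right le_rfl⟩
  · rw [Measure.map_add _ _ measurable_fst, Measure.map_comp _ _ measurable_fst,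
      ← Kernel.fst_eq, Kernel.fst_prod, hW₁, ← Measure.comp_add, add_comm,
      Measure.sub_add_cancel_of_le hν₁]
  · rw [Measure.map_add _ _ measurable_snd, Measure.map_comp _ _ measurable_snd,
      ← Kernel.snd_eq, Kernel.snd_prod, hW₂, ← Measure.comp_add, add_comm,
      Measure.sub_add_cancel_of_le hν₂]

lemma exists_isCoupling_one_sub_le_measure_setOf_eq [MeasurableEq Q] [StandardBorelSpace X₁]
    [Nonempty X₁] [StandardBorelSpace X₂] [Nonempty X₂] {f₁ : X₁ → Q} {f₂ : X₂ → Q}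
    (hf₁ : Measurable f₁) (hf₂ : Measurable f₂) (Δ : Measure X₁) (Θ : Measure X₂)
    [IsProbabilityMeasure Δ] [IsProbabilityMeasure Θ] {ε : ℝ≥0∞}
    (h : ∀ B, MeasurableSet B → Δ (f₁ ⁻¹' B) ≤ Θ (f₂ ⁻¹' B) + ε) :
    ∃ W : Measure (X₁ × X₂), IsCoupling W Δ Θ ∧ 1 - ε ≤ W {p | f₁ p.1 = f₂ p.2} := by
  have : IsProbabilityMeasure (Δ.map f₁) := Measure.isProbabilityMeasure_map hf₁.aemeasurable
  have : IsProbabilityMeasure (Θ.map f₂) := Measure.isProbabilityMeasure_map hf₂.aemeasurable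
  obtain ⟨ν, hν₁, hν₂, hνε⟩ :=
    exists_le_le_measure_univ_le_add (μ₁ := Δ.map f₁) (μ₂ := Θ.map f₂) fun B hB => by
      simpa only [Measure.map_apply hf₁ hB, Measure.map_apply hf₂ hB] using h B hB
  have : IsFiniteMeasure ν := isFiniteMeasure_of_le _ hν₁
  obtain ⟨κ₁, _, hκ₁, hfib₁⟩ := exists_isMarkovKernel_comp_map_eq hf₁ Δ
  obtain ⟨κ₂, _, hκ₂, hfib₂⟩ := exists_isMarkovKernel_comp_map_eq hf₂ Θ
  obtain ⟨W, hW₁, hW₂, hνW⟩ :=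
    exists_map_fst_eq_comp_map_snd_eq_comp hν₁ hν₂ (by simp only [measure_univ]) κ₁ κ₂
  refine ⟨W, isCoupling_of_map_fst_of_map_snd (hW₁.trans hκ₁) (hW₂.trans hκ₂), ?_⟩
  calc 1 - ε ≤ ν univ := by rwa [tsub_le_iff_right, ← measure_univ (μ := Δ.map f₁)]
    _ = ((κ₁ ×ₖ κ₂) ∘ₘ ν) {p | f₁ p.1 = f₂ p.2} :=
      (prod_comp_apply_setOf_eq hf₁ hf₂ (ae_mono hν₁ hfib₁) (ae_mono hν₂ hfib₂)).symm
    _ ≤ W {p | f₁ p.1 = f₂ p.2} := hνW _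

end

theorem approxEquiv_iff_liftedRel_general
    {X₁ X₂ Q : Type*}
    [MeasurableSpace X₁] [StandardBorelSpace X₁] [Nonempty X₁]
    [MeasurableSpace X₂] [StandardBorelSpace X₂] [Nonempty X₂]
    [MeasurableSpace Q] [StandardBorelSpace Q]
    (f₁ : X₁ → Q) (f₂ : X₂ → Q)
    (hf₁ : Measurable f₁) (hf₂ : Measurable f₂)
    (Δ : Measure X₁) (Θ : Measure X₂)
    [IsProbabilityMeasure Δ] [IsProbabilityMeasure Θ]
    (δ : ℝ) :
    (∀ B : Set Q, MeasurableSet B →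
        Δ (f₁ ⁻¹' B) ≤ Θ (f₂ ⁻¹' B) + ENNReal.ofReal δ ∧
        Θ (f₂ ⁻¹' B) ≤ Δ (f₁ ⁻¹' B) + ENNReal.ofReal δ) ↔
    (∃ W : Measure (X₁ × X₂), IsCoupling W Δ Θ ∧
        1 - ENNReal.ofReal δ ≤ W {p : X₁ × X₂ | f₁ p.1 = f₂ p.2}) := by
  refine ⟨fun h => exists_isCoupling_one_sub_le_measure_setOf_eq hf₁ hf₂ Δ Θ
    fun B hB => (h B hB).1, ?_⟩
  rintro ⟨W, hW, hWR⟩ B hB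
  have : IsProbabilityMeasure W := hW.1
  have hRc : W {p : X₁ × X₂ | f₁ p.1 = f₂ p.2}ᶜ ≤ ENNReal.ofReal δ := by
    rw [prob_compl_eq_one_sub (measurableSet_setOf_apply_fst_eq_apply_snd hf₁ hf₂)]
    exact (tsub_le_tsub_left hWR 1).trans tsub_tsub_le
  obtain ⟨h₁, h₂⟩ := hW.measure_le_add_measure_compl (R := {p | f₁ p.1 = f₂ p.2}) (hf₁ hB)
    (hf₂ hB) fun p (hp : f₁ p.1 = f₂ p.2) => by rw [mem_preimage, mem_preimage, hp]
  exact ⟨h₁.trans (by gcongr), h₂.trans (by gcongr)⟩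

/-- For quotient maps `f₁, f₂` into a common standard Borel space, δ-equivalence of the
pushforward measures on every measurable set is equivalent to the existence of a coupling
putting mass at least `1 - δ` on the relation `{(x₁, x₂) | f₁ x₁ = f₂ x₂}`
(Theorem on δ-lifting vs. δ-equivalence). -/
theorem approxEquiv_iff_liftedRel
    {X₁ X₂ Q : Type*}
    [MeasurableSpace X₁] [StandardBorelSpace X₁] [Nonempty X₁]
    [MeasurableSpace X₂] [StandardBorelSpace X₂] [Nonempty X₂]
    [MeasurableSpace Q] [StandardBorelSpace Q] [Nonempty Q]
    (f₁ : X₁ → Q) (f₂ : X₂ → Q)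
    (hf₁ : Measurable f₁) (hf₂ : Measurable f₂)
    (hs₁ : Function.Surjective f₁) (hs₂ : Function.Surjective f₂)
    (Δ : Measure X₁) (Θ : Measure X₂)
    [IsProbabilityMeasure Δ] [IsProbabilityMeasure Θ]
    (δ : ℝ) (hδ0 : 0 ≤ δ) (hδ1 : δ ≤ 1) :
    (∀ B : Set Q, MeasurableSet B →
        Δ (f₁ ⁻¹' B) ≤ Θ (f₂ ⁻¹' B) + ENNReal.ofReal δ ∧
        Θ (f₂ ⁻¹' B) ≤ Δ (f₁ ⁻¹' B) + ENNReal.ofReal δ) ↔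
    (∃ W : Measure (X₁ × X₂), IsCoupling W Δ Θ ∧
        1 - ENNReal.ofReal δ ≤ W {p : X₁ × X₂ | f₁ p.1 = f₂ p.2}) :=
  approxEquiv_iff_liftedRel_general f₁ f₂ hf₁ hf₂ Δ Θ δ
end

section
/- Let X₁, X₂, Q be nonempty standard Borel spaces, let f₁ : X₁ → Q and f₂ : X₂ → Q be measurable surjections, and let Δ, Θ be Borel probability measures on X₁, X₂ respectively. Then the following are equivalent: (i) for every measurable set B ⊆ Q, Δ(f₁⁻¹(B)) = Θ(f₂⁻¹(B)); (ii) there exists a coupling W of Δ and Θ with W({(x₁,x₂) | f₁(x₁) = f₂(x₂)}) = 1. -/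
/-!
Disintegrate `Δ` and `Θ` along `f₁` and `f₂`: if both push forward to the same law `μ` on `Q`,
draw `q ∼ μ` and then `x₁`, `x₂` independently from the conditional laws on the fibres over `q`.
Both points then lie over the same `q`, and the marginals are `Δ` and `Θ`. Conversely, a coupling
concentrated on `{f₁ x₁ = f₂ x₂}` pushes forward to the same law on `Q` through either factor.
-/

open MeasureTheory

open ProbabilityTheory

section

variable {X₁ X₂ Q : Type*} [MeasurableSpace X₁] [MeasurableSpace X₂] [MeasurableSpace Q]

theorem isCoupling_comp_prod (μ : Measure Q) [IsProbabilityMeasure μ]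
    (κ₁ : Kernel Q X₁) (κ₂ : Kernel Q X₂) [IsMarkovKernel κ₁] [IsMarkovKernel κ₂] :
    IsCoupling ((κ₁ ×ₖ κ₂) ∘ₘ μ) (κ₁ ∘ₘ μ) (κ₂ ∘ₘ μ) :=
  ⟨inferInstance, by rw [Measure.map_comp _ _ measurable_fst, ← Kernel.fst_eq, Kernel.fst_prod],
    by rw [Measure.map_comp _ _ measurable_snd, ← Kernel.snd_eq, Kernel.snd_prod]⟩

theorem IsCoupling.map_eq_map_of_ae_eq {W : Measure (X₁ × X₂)} {μ : Measure X₁}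
    {ν : Measure X₂} (hW : IsCoupling W μ ν) {f₁ : X₁ → Q} {f₂ : X₂ → Q}
    (hf₁ : Measurable f₁) (hf₂ : Measurable f₂) (h : ∀ᵐ p ∂W, f₁ p.1 = f₂ p.2) :
    μ.map f₁ = ν.map f₂ := by
  obtain ⟨-, rfl, rfl⟩ := hW
  rw [Measure.map_map hf₁ measurable_fst, Measure.map_map hf₂ measurable_snd]
  exact Measure.map_congr h

theorem ae_ae_condDistrib_id_eq [MeasurableEq Q] [StandardBorelSpace X₁] [Nonempty X₁]
    (μ : Measure X₁) [IsFiniteMeasure μ] {f : X₁ → Q} (hf : Measurable f) :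
    ∀ᵐ q ∂μ.map f, ∀ᵐ x ∂condDistrib id f μ q, f x = q := by
  have hgraph : MeasurableSet {p : Q × X₁ | f p.2 = p.1} :=
    measurableSet_eq_fun (hf.comp measurable_snd) measurable_fst
  refine (Measure.ae_compProd_iff hgraph).1 ?_
  rw [compProd_map_condDistrib aemeasurable_id,
    ae_map_iff (hf.prodMk measurable_id).aemeasurable hgraph]
  exact ae_of_all _ fun _ ↦ rfl

theorem exists_isCoupling_ae_eq_of_map_eq [MeasurableEq Q]
    [StandardBorelSpace X₁] [Nonempty X₁] [StandardBorelSpace X₂] [Nonempty X₂]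
    {μ : Measure X₁} {ν : Measure X₂} [IsProbabilityMeasure μ] [IsProbabilityMeasure ν]
    {f₁ : X₁ → Q} {f₂ : X₂ → Q} (hf₁ : Measurable f₁) (hf₂ : Measurable f₂)
    (h : μ.map f₁ = ν.map f₂) :
    ∃ W : Measure (X₁ × X₂), IsCoupling W μ ν ∧ ∀ᵐ p ∂W, f₁ p.1 = f₂ p.2 := by
  have : IsProbabilityMeasure (μ.map f₁) := Measure.isProbabilityMeasure_map hf₁.aemeasurable
  set κ₁ := condDistrib id f₁ μ
  set κ₂ := condDistrib id f₂ ν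
  have hκ₁ : κ₁ ∘ₘ μ.map f₁ = μ := by
    rw [condDistrib_comp_map hf₁.aemeasurable aemeasurable_id, Measure.map_id]
  have hκ₂ : κ₂ ∘ₘ μ.map f₁ = ν := by
    rw [h, condDistrib_comp_map hf₂.aemeasurable aemeasurable_id, Measure.map_id]
  have hW := isCoupling_comp_prod (μ.map f₁) κ₁ κ₂
  rw [hκ₁, hκ₂] at hW
  refine ⟨(κ₁ ×ₖ κ₂) ∘ₘ μ.map f₁, hW, ?_⟩
  refine Measure.ae_comp_of_ae_ae
    (measurableSet_eq_fun (hf₁.comp measurable_fst) (hf₂.comp measurable_snd)) ?_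
  filter_upwards [ae_ae_condDistrib_id_eq μ hf₁, h ▸ ae_ae_condDistrib_id_eq ν hf₂]
    with q hq₁ hq₂
  rw [Kernel.prod_apply]
  filter_upwards [Measure.quasiMeasurePreserving_fst.ae hq₁,
    Measure.quasiMeasurePreserving_snd.ae hq₂] with p hp₁ hp₂
  exact hp₁.trans hp₂.symm

end

theorem equiv_iff_exactLiftedRel_general
    {X₁ X₂ Q : Type*}
    [MeasurableSpace X₁] [StandardBorelSpace X₁] [Nonempty X₁]
    [MeasurableSpace X₂] [StandardBorelSpace X₂] [Nonempty X₂]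
    [MeasurableSpace Q] [StandardBorelSpace Q]
    (f₁ : X₁ → Q) (f₂ : X₂ → Q)
    (hf₁ : Measurable f₁) (hf₂ : Measurable f₂)
    (Δ : Measure X₁) (Θ : Measure X₂)
    [IsProbabilityMeasure Δ] [IsProbabilityMeasure Θ] :
    (∀ B : Set Q, MeasurableSet B → Δ (f₁ ⁻¹' B) = Θ (f₂ ⁻¹' B)) ↔
    (∃ W : Measure (X₁ × X₂), IsCoupling W Δ Θ ∧
        W {p : X₁ × X₂ | f₁ p.1 = f₂ p.2} = 1) := by
  have hS : MeasurableSet {p : X₁ × X₂ | f₁ p.1 = f₂ p.2} :=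
    measurableSet_eq_fun (hf₁.comp measurable_fst) (hf₂.comp measurable_snd)
  calc (∀ B : Set Q, MeasurableSet B → Δ (f₁ ⁻¹' B) = Θ (f₂ ⁻¹' B))
      ↔ Δ.map f₁ = Θ.map f₂ := by
        rw [Measure.ext_iff]
        exact forall₂_congr fun B hB ↦ by rw [Measure.map_apply hf₁ hB, Measure.map_apply hf₂ hB]
    _ ↔ ∃ W : Measure (X₁ × X₂), IsCoupling W Δ Θ ∧ ∀ᵐ p ∂W, f₁ p.1 = f₂ p.2 :=
        ⟨exists_isCoupling_ae_eq_of_map_eq hf₁ hf₂,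
          fun ⟨_, hW, h⟩ ↦ hW.map_eq_map_of_ae_eq hf₁ hf₂ h⟩
    _ ↔ _ := exists_congr fun W ↦ and_congr_right fun hW ↦
        haveI := hW.1
        mem_ae_iff_prob_eq_one hS

/-- For quotient maps `f₁, f₂` into a common standard Borel space, exact equivalence of
the pushforward measures on every measurable set is equivalent to the existence of a
coupling putting full mass on the relation `{(x₁, x₂) | f₁ x₁ = f₂ x₂}`
(exact lifting vs. exact equivalence, Claim on probabilistic bisimulation). -/
theorem equiv_iff_exactLiftedRel
    {X₁ X₂ Q : Type*}
    [MeasurableSpace X₁] [StandardBorelSpace X₁] [Nonempty X₁]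
    [MeasurableSpace X₂] [StandardBorelSpace X₂] [Nonempty X₂]
    [MeasurableSpace Q] [StandardBorelSpace Q] [Nonempty Q]
    (f₁ : X₁ → Q) (f₂ : X₂ → Q)
    (hf₁ : Measurable f₁) (hf₂ : Measurable f₂)
    (hs₁ : Function.Surjective f₁) (hs₂ : Function.Surjective f₂)
    (Δ : Measure X₁) (Θ : Measure X₂)
    [IsProbabilityMeasure Δ] [IsProbabilityMeasure Θ] :
    (∀ B : Set Q, MeasurableSet B → Δ (f₁ ⁻¹' B) = Θ (f₂ ⁻¹' B)) ↔
    (∃ W : Measure (X₁ × X₂), IsCoupling W Δ Θ ∧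
        W {p : X₁ × X₂ | f₁ p.1 = f₂ p.2} = 1) :=
  equiv_iff_exactLiftedRel_general f₁ f₂ hf₁ hf₂ Δ Θ
end

section
/- Let X₁, X₂, Q be nonempty standard Borel spaces, f₁ : X₁ → Q and f₂ : X₂ → Q measurable maps, Δ, Θ Borel probability measures on X₁, X₂, and let ρ be a probability measure on Q × Q whose first marginal is the pushforward of Δ under f₁ and whose second marginal is the pushforward of Θ under f₂. Then there exists a coupling W of Δ and Θ such that W({(x₁,x₂) | f₁(x₁) = f₂(x₂)}) ≥ ρ({(q,q') ∈ Q × Q | q = q'}). -/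
open MeasureTheory

/-!
Disintegrate `Δ` along `f₁` and `Θ` along `f₂` into kernels `κ₁ : Q → X₁`, `κ₂ : Q → X₂`
with `κ₁ q` carried by `f₁ ⁻¹' {q}` and `κ₂ q` by `f₂ ⁻¹' {q}` for almost every `q`.
Let `W` draw `(q, q')` from `ρ`, then `x₁ ∼ κ₁ q` and `x₂ ∼ κ₂ q'` independently. Its
marginals are `κ₁ ∘ₘ Δ.map f₁ = Δ` and `κ₂ ∘ₘ Θ.map f₂ = Θ`, and on the event `q = q'`
it almost surely has `f₁ x₁ = q = f₂ x₂`.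
-/

open ProbabilityTheory

namespace MeasureTheory.Measure

variable {α β γ δ : Type*} [MeasurableSpace α] [MeasurableSpace β] [MeasurableSpace γ]
  [MeasurableSpace δ]

lemma map_fst_parallelComp_comp (ρ : Measure (α × γ)) (κ : Kernel α β)
    [IsSFiniteKernel κ] (η : Kernel γ δ) [IsMarkovKernel η] :
    ((κ ∥ₖ η) ∘ₘ ρ).map Prod.fst = κ ∘ₘ ρ.map Prod.fst := by
  ext s hs
  rw [map_apply measurable_fst hs, bind_apply (measurable_fst hs) (Kernel.aemeasurable _),
    bind_apply hs (Kernel.aemeasurable _), lintegral_map (κ.measurable_coe hs) measurable_fst]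
  simp [← Set.prod_univ, Kernel.parallelComp_apply_prod]

lemma map_snd_parallelComp_comp (ρ : Measure (α × γ)) (κ : Kernel α β)
    [IsMarkovKernel κ] (η : Kernel γ δ) [IsSFiniteKernel η] :
    ((κ ∥ₖ η) ∘ₘ ρ).map Prod.snd = η ∘ₘ ρ.map Prod.snd := by
  ext s hs
  rw [map_apply measurable_snd hs, bind_apply (measurable_snd hs) (Kernel.aemeasurable _),
    bind_apply hs (Kernel.aemeasurable _), lintegral_map (η.measurable_coe hs) measurable_snd]
  simp [← Set.univ_prod, Kernel.parallelComp_apply_prod]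

lemma le_comp_apply_of_ae {ρ : Measure α} {η : Kernel α β} [IsMarkovKernel η]
    {s : Set α} {t : Set β} (ht : MeasurableSet t) (h : ∀ᵐ a ∂ρ, a ∈ s → ∀ᵐ b ∂η a, b ∈ t) :
    ρ s ≤ (η ∘ₘ ρ) t := by
  have hs : ρ s ≤ ρ {a | 1 ≤ η a t} := by
    refine measure_mono_ae ?_
    filter_upwards [h] with a ha has
    exact ((prob_compl_eq_zero_iff ht).mp (ae_iff.mp (ha has))).ge
  calc ρ s ≤ 1 * ρ {a | 1 ≤ η a t} := by rwa [one_mul]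
    _ ≤ ∫⁻ a, η a t ∂ρ := mul_meas_ge_le_lintegral₀ (η.measurable_coe ht).aemeasurable 1
    _ = (η ∘ₘ ρ) t := (bind_apply ht (Kernel.aemeasurable _)).symm

end MeasureTheory.Measure

section FiberKernel

variable {X Q : Type*} [MeasurableSpace X] [StandardBorelSpace X] [Nonempty X]
  [MeasurableSpace Q] {f : X → Q}

noncomputable def fiberKernel (f : X → Q) (μ : Measure X) [IsFiniteMeasure μ] : Kernel Q X :=
  (μ.map fun x ↦ (f x, x)).condKernel

variable (μ : Measure X) [IsFiniteMeasure μ]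

instance : IsMarkovKernel (fiberKernel f μ) := by
  unfold fiberKernel; infer_instance

lemma fiberKernel_comp_map (hf : Measurable f) : fiberKernel f μ ∘ₘ μ.map f = μ := by
  set ν := μ.map fun x ↦ (f x, x)
  have hfst : ν.fst = μ.map f := Measure.fst_map_prodMk measurable_id
  calc fiberKernel f μ ∘ₘ μ.map f = (ν.fst ⊗ₘ ν.condKernel).snd := by
        rw [Measure.snd_compProd, hfst]; rfl
    _ = μ := by rw [ν.disintegrate, Measure.snd_map_prodMk hf, Measure.map_id']

lemma ae_ae_fiberKernel [MeasurableEq Q] (hf : Measurable f) :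
    ∀ᵐ q ∂μ.map f, ∀ᵐ x ∂fiberKernel f μ q, f x = q := by
  set ν := μ.map fun x ↦ (f x, x)
  have hfst : ν.fst = μ.map f := Measure.fst_map_prodMk measurable_id
  have hgraph : ∀ᵐ p ∂ν, f p.2 = p.1 :=
    (ae_map_iff (hf.prodMk measurable_id).aemeasurable
      (measurableSet_eq_fun (hf.comp measurable_snd) measurable_fst)).mpr
      (ae_of_all _ fun _ ↦ rfl)
  rw [← ν.disintegrate ν.condKernel, hfst] at hgraph
  exact Measure.ae_ae_of_ae_compProd hgraph

end FiberKernel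

theorem exists_coupling_of_quotient_coupling_general
    {X₁ X₂ Q : Type*}
    [MeasurableSpace X₁] [StandardBorelSpace X₁] [Nonempty X₁]
    [MeasurableSpace X₂] [StandardBorelSpace X₂] [Nonempty X₂]
    [MeasurableSpace Q] [StandardBorelSpace Q]
    (f₁ : X₁ → Q) (f₂ : X₂ → Q)
    (hf₁ : Measurable f₁) (hf₂ : Measurable f₂)
    (Δ : Measure X₁) (Θ : Measure X₂)
    [IsProbabilityMeasure Δ] [IsProbabilityMeasure Θ]
    (ρ : Measure (Q × Q)) [IsProbabilityMeasure ρ]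
    (hρ₁ : ρ.map Prod.fst = Δ.map f₁) (hρ₂ : ρ.map Prod.snd = Θ.map f₂) :
    ∃ W : Measure (X₁ × X₂), IsCoupling W Δ Θ ∧
      ρ {q : Q × Q | q.1 = q.2} ≤ W {p : X₁ × X₂ | f₁ p.1 = f₂ p.2} := by
  refine ⟨(fiberKernel f₁ Δ ∥ₖ fiberKernel f₂ Θ) ∘ₘ ρ, ⟨inferInstance, ?_, ?_⟩, ?_⟩
  · rw [Measure.map_fst_parallelComp_comp, hρ₁, fiberKernel_comp_map Δ hf₁]
  · rw [Measure.map_snd_parallelComp_comp, hρ₂, fiberKernel_comp_map Θ hf₂]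
  · have hS : MeasurableSet {z : X₁ × X₂ | f₁ z.1 = f₂ z.2} :=
      measurableSet_eq_fun (hf₁.comp measurable_fst) (hf₂.comp measurable_snd)
    refine Measure.le_comp_apply_of_ae hS ?_
    have h₁ := ae_of_ae_map measurable_fst.aemeasurable (hρ₁ ▸ ae_ae_fiberKernel Δ hf₁)
    have h₂ := ae_of_ae_map measurable_snd.aemeasurable (hρ₂ ▸ ae_ae_fiberKernel Θ hf₂)
    filter_upwards [h₁, h₂] with p hx hy (hdiag : p.1 = p.2)
    rw [Kernel.parallelComp_apply, Measure.ae_prod_iff_ae_ae hS]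
    filter_upwards [hx] with x hx
    filter_upwards [hy] with y hy
    exact hx.trans (hdiag.trans hy.symm)

/-- Lifting a coupling on the quotient space: given a coupling `ρ` of the pushforwards
of `Δ` and `Θ` under `f₁` and `f₂`, there is a coupling `W` of `Δ` and `Θ` placing at
least as much mass on `{(x₁, x₂) | f₁ x₁ = f₂ x₂}` as `ρ` places on the diagonal. -/
theorem exists_coupling_of_quotient_coupling
    {X₁ X₂ Q : Type*}
    [MeasurableSpace X₁] [StandardBorelSpace X₁] [Nonempty X₁]
    [MeasurableSpace X₂] [StandardBorelSpace X₂] [Nonempty X₂]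
    [MeasurableSpace Q] [StandardBorelSpace Q] [Nonempty Q]
    (f₁ : X₁ → Q) (f₂ : X₂ → Q)
    (hf₁ : Measurable f₁) (hf₂ : Measurable f₂)
    (Δ : Measure X₁) (Θ : Measure X₂)
    [IsProbabilityMeasure Δ] [IsProbabilityMeasure Θ]
    (ρ : Measure (Q × Q)) [IsProbabilityMeasure ρ]
    (hρ₁ : ρ.map Prod.fst = Δ.map f₁) (hρ₂ : ρ.map Prod.snd = Θ.map f₂) :
    ∃ W : Measure (X₁ × X₂), IsCoupling W Δ Θ ∧
      ρ {q : Q × Q | q.1 = q.2} ≤ W {p : X₁ × X₂ | f₁ p.1 = f₂ p.2} :=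
  exists_coupling_of_quotient_coupling_general f₁ f₂ hf₁ hf₂ Δ Θ ρ hρ₁ hρ₂
end

section
/- Let X₁, X₂ be measurable spaces and (Y,d) a metric space with its Borel σ-algebra, let ε ≥ 0 and δ ∈ [0,1]. Let W be a probability measure on X₁ × X₂ with first marginal Δ and second marginal Θ, let R ⊆ X₁ × X₂ be a measurable set with W(R) ≥ 1 − δ, and let h₁ : X₁ → Y, h₂ : X₂ → Y be Borel measurable with d(h₁(x₁), h₂(x₂)) ≤ ε for all (x₁,x₂) ∈ R. Then for every Borel set A ⊆ Y: Δ(h₁⁻¹(A_{−ε})) ≤ Θ(h₂⁻¹(A)) + δ and Θ(h₂⁻¹(A)) ≤ Δ(h₁⁻¹(A_ε)) + δ, where A_ε denotes the closed ε-thickening of A (the set of points at infimal distance at most ε from A, Metric.cthickening ε A) and A_{−ε} denotes the ε-contraction of A, i.e. the complement of the closed ε-thickening of Aᶜ. -/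
/-!
On the event `R`, which the coupling `W` misses with mass at most `δ`, the two coordinates
have `ε`-close outputs. So on `R` the event `h₁ ∈ A₋ε` forces `h₂ ∈ A`, and
`h₂ ∈ A` forces `h₁ ∈ Aε`; each implication costs at most `W Rᶜ ≤ δ` in probability.
-/

namespace MeasureTheory

theorem measure_compl_le_of_one_sub_le {Ω : Type*} [MeasurableSpace Ω] {μ : Measure Ω}
    [IsProbabilityMeasure μ] {s : Set Ω} {c : ENNReal} (hs : MeasurableSet s)
    (h : 1 - c ≤ μ s) : μ sᶜ ≤ c :=
  (prob_compl_eq_one_sub hs).trans_le (tsub_le_iff_tsub_le.mp h)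

theorem Measure.map_apply_le_map_apply_add {Ω α β : Type*} [MeasurableSpace Ω]
    [MeasurableSpace α] [MeasurableSpace β] {μ : Measure Ω} {f : Ω → α} {g : Ω → β}
    {R : Set Ω} {B : Set α} {C : Set β} {c : ENNReal}
    (hf : Measurable f) (hg : AEMeasurable g μ) (hB : MeasurableSet B)
    (hR : μ Rᶜ ≤ c) (hBC : ∀ ω ∈ R, f ω ∈ B → g ω ∈ C) :
    μ.map f B ≤ μ.map g C + c := by
  have hsub : f ⁻¹' B ∩ R ⊆ g ⁻¹' C := fun ω ⟨hωB, hωR⟩ => hBC ω hωR hωB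
  calc μ.map f B = μ (f ⁻¹' B) := Measure.map_apply hf hB
    _ ≤ μ (f ⁻¹' B ∩ R) + μ (f ⁻¹' B \ R) := measure_le_inter_add_sdiff _ _ _
    _ ≤ μ (g ⁻¹' C) + μ Rᶜ := by
        gcongr
        exact Set.sdiff_subset_compl _ _
    _ ≤ μ.map g C + c := add_le_add (Measure.le_map_apply hg C) hR

end MeasureTheory

open MeasureTheory

theorem Metric.mem_of_mem_compl_cthickening_compl_of_dist_le {Y : Type*}
    [PseudoMetricSpace Y] {ε : ℝ} {A : Set Y} {x y : Y}
    (hx : x ∈ (Metric.cthickening ε Aᶜ)ᶜ) (hxy : dist x y ≤ ε) : y ∈ A := by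
  by_contra hy
  exact hx (Metric.mem_cthickening_of_dist_le x y ε Aᶜ hy hxy)

theorem output_event_bounds_general
    {X₁ X₂ Y : Type*} [MeasurableSpace X₁] [MeasurableSpace X₂]
    [MetricSpace Y] [MeasurableSpace Y] [BorelSpace Y]
    (ε δ : ℝ)
    (W : Measure (X₁ × X₂)) [IsProbabilityMeasure W]
    (Δ : Measure X₁) (Θ : Measure X₂)
    (hΔ : W.map Prod.fst = Δ) (hΘ : W.map Prod.snd = Θ)
    (R : Set (X₁ × X₂)) (hR : MeasurableSet R)
    (hWR : 1 - ENNReal.ofReal δ ≤ W R)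
    (h₁ : X₁ → Y) (h₂ : X₂ → Y) (mh₁ : Measurable h₁) (mh₂ : Measurable h₂)
    (hd : ∀ p ∈ R, dist (h₁ p.1) (h₂ p.2) ≤ ε) :
    ∀ A : Set Y, MeasurableSet A →
      Δ (h₁ ⁻¹' (Metric.cthickening ε Aᶜ)ᶜ) ≤ Θ (h₂ ⁻¹' A) + ENNReal.ofReal δ ∧
      Θ (h₂ ⁻¹' A) ≤ Δ (h₁ ⁻¹' Metric.cthickening ε A) + ENNReal.ofReal δ := by
  intro A hA
  have hRc : W Rᶜ ≤ ENNReal.ofReal δ := measure_compl_le_of_one_sub_le hR hWR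
  subst hΔ hΘ
  constructor
  · exact Measure.map_apply_le_map_apply_add measurable_fst measurable_snd.aemeasurable
      (mh₁ Metric.isClosed_cthickening.measurableSet.compl) hRc fun p hp hp₁ =>
        Metric.mem_of_mem_compl_cthickening_compl_of_dist_le (A := A) hp₁ (hd p hp)
  · exact Measure.map_apply_le_map_apply_add measurable_snd measurable_fst.aemeasurable
      (mh₂ hA) hRc fun p hp hp₂ =>
        Metric.mem_cthickening_of_dist_le _ _ ε A hp₂ (dist_comm (h₁ p.1) _ ▸ hd p hp)

/-- One-step probability bounds for ε,δ-approximate simulations: if a coupling puts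
mass at least `1 - δ` on a relation along which outputs are within distance `ε`, then
for every Borel set `A` of outputs, the measure of the `ε`-contraction `A₋ε` under `h₁`
is at most the measure of `A` under `h₂` plus `δ`, and the measure of `A` under `h₂` is
at most the measure of the `ε`-expansion `Aε` under `h₁` plus `δ`. -/
theorem output_event_bounds
    {X₁ X₂ Y : Type*} [MeasurableSpace X₁] [MeasurableSpace X₂]
    [MetricSpace Y] [MeasurableSpace Y] [BorelSpace Y]
    (ε δ : ℝ) (hε : 0 ≤ ε) (hδ0 : 0 ≤ δ) (hδ1 : δ ≤ 1)
    (W : Measure (X₁ × X₂)) [IsProbabilityMeasure W]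
    (Δ : Measure X₁) (Θ : Measure X₂)
    (hΔ : W.map Prod.fst = Δ) (hΘ : W.map Prod.snd = Θ)
    (R : Set (X₁ × X₂)) (hR : MeasurableSet R)
    (hWR : 1 - ENNReal.ofReal δ ≤ W R)
    (h₁ : X₁ → Y) (h₂ : X₂ → Y) (mh₁ : Measurable h₁) (mh₂ : Measurable h₂)
    (hd : ∀ p ∈ R, dist (h₁ p.1) (h₂ p.2) ≤ ε) :
    ∀ A : Set Y, MeasurableSet A →
      Δ (h₁ ⁻¹' (Metric.cthickening ε Aᶜ)ᶜ) ≤ Θ (h₂ ⁻¹' A) + ENNReal.ofReal δ ∧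
      Θ (h₂ ⁻¹' A) ≤ Δ (h₁ ⁻¹' Metric.cthickening ε A) + ENNReal.ofReal δ :=
  output_event_bounds_general ε δ W Δ Θ hΔ hΘ R hR hWR h₁ h₂ mh₁ mh₂ hd
end

section
/- Let E be a separable normed vector space with its Borel σ-algebra, U a type, Ω a measurable space carrying a probability measure P, and let g₁, g₂ : Ω → E be measurable maps with P({ω | ‖g₁(ω) − g₂(ω)‖ ≤ c}) = 1 for some c ≥ 0. Let f : E × U → E satisfy ‖f(a,u) − f(b,u)‖ ≤ L·‖a − b‖ for all a, b ∈ E, u ∈ U, where 0 ≤ L < 1. Fix u ∈ U and x₁, x₂ ∈ E with ‖x₁ − x₂‖ ≤ c/(1−L), and define W as the pushforward of P under ω ↦ (f(x₁,u) + g₁(ω), f(x₂,u) + g₂(ω)). Then W is a coupling of the pushforward of P under ω ↦ f(x₁,u) + g₁(ω) and the pushforward of P under ω ↦ f(x₂,u) + g₂(ω), and W({(a,b) ∈ E × E | ‖a − b‖ ≤ c/(1−L)}) = 1. -/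
/-!
The radius `c / (1 - L)` is the fixed point of `r ↦ L * r + c`: the contraction shrinks the
distance of two related states to at most `L * c / (1 - L)`, and the almost surely `c`-close
noise adds at most `c`. So feeding both states the same `ω` is a coupling that stays in the
relation almost surely.
-/

open MeasureTheory

theorem norm_add_sub_add_le_div_one_sub {E : Type*} [SeminormedAddCommGroup E] {L c : ℝ}
    (hL0 : 0 ≤ L) (hL1 : L < 1) {x₁ x₂ y₁ y₂ z₁ z₂ : E} (hx : ‖x₁ - x₂‖ ≤ c / (1 - L))
    (hy : ‖y₁ - y₂‖ ≤ L * ‖x₁ - x₂‖) (hz : ‖z₁ - z₂‖ ≤ c) :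
    ‖(y₁ + z₁) - (y₂ + z₂)‖ ≤ c / (1 - L) := by
  have hy' : ‖y₁ - y₂‖ ≤ L * (c / (1 - L)) := hy.trans (mul_le_mul_of_nonneg_left hx hL0)
  have hfix : L * (c / (1 - L)) + c = c / (1 - L) := by
    field_simp [(sub_pos.2 hL1).ne']
    ring
  rw [← dist_eq_norm, ← hfix]
  exact dist_add_add_le_of_le (by rwa [dist_eq_norm]) (by rwa [dist_eq_norm])

theorem isCoupling_map_prodMk {Ω X₁ X₂ : Type*} [MeasurableSpace Ω] [MeasurableSpace X₁]
    [MeasurableSpace X₂] (P : Measure Ω) [IsProbabilityMeasure P] {X : Ω → X₁} {Y : Ω → X₂}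
    (hX : Measurable X) (hY : Measurable Y) :
    IsCoupling (P.map fun ω => (X ω, Y ω)) (P.map X) (P.map Y) := by
  refine ⟨Measure.isProbabilityMeasure_map (hX.prodMk hY).aemeasurable, ?_, ?_⟩
  · rw [Measure.map_map measurable_fst (hX.prodMk hY)]
    rfl
  · rw [Measure.map_map measurable_snd (hX.prodMk hY)]
    rfl

theorem map_apply_eq_one_of_subset_preimage {Ω α : Type*} [MeasurableSpace Ω] [MeasurableSpace α]
    {P : Measure Ω} [IsProbabilityMeasure P] {F : Ω → α} (hF : AEMeasurable F P) {S : Set Ω}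
    {T : Set α} (hS : P S = 1) (hST : S ⊆ F ⁻¹' T) : P.map F T = 1 := by
  have := Measure.isProbabilityMeasure_map hF
  exact le_antisymm prob_le_one (hS ▸ (measure_mono hST).trans (Measure.le_map_apply hF T))

theorem shared_noise_coupling_general
    {E U Ω : Type*} [NormedAddCommGroup E]
    [MeasurableSpace E] [BorelSpace E]
    [MeasurableSpace Ω]
    (P : Measure Ω) [IsProbabilityMeasure P]
    (g₁ g₂ : Ω → E) (hg₁ : Measurable g₁) (hg₂ : Measurable g₂)
    (c : ℝ)
    (hP : P {ω : Ω | ‖g₁ ω - g₂ ω‖ ≤ c} = 1)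
    (L : ℝ) (hL0 : 0 ≤ L) (hL1 : L < 1)
    (f : E × U → E) (hf : ∀ (a b : E) (u : U), ‖f (a, u) - f (b, u)‖ ≤ L * ‖a - b‖)
    (u : U) (x₁ x₂ : E) (hx : ‖x₁ - x₂‖ ≤ c / (1 - L)) :
    IsCoupling (P.map (fun ω => (f (x₁, u) + g₁ ω, f (x₂, u) + g₂ ω)))
      (P.map (fun ω => f (x₁, u) + g₁ ω)) (P.map (fun ω => f (x₂, u) + g₂ ω)) ∧
    P.map (fun ω => (f (x₁, u) + g₁ ω, f (x₂, u) + g₂ ω))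
        {p : E × E | ‖p.1 - p.2‖ ≤ c / (1 - L)} = 1 := by
  have hm₁ : Measurable fun ω => f (x₁, u) + g₁ ω := hg₁.const_add _
  have hm₂ : Measurable fun ω => f (x₂, u) + g₂ ω := hg₂.const_add _
  refine ⟨isCoupling_map_prodMk P hm₁ hm₂,
    map_apply_eq_one_of_subset_preimage (hm₁.prodMk hm₂).aemeasurable hP fun _ hω =>
      norm_add_sub_add_le_div_one_sub hL0 hL1 hx (hf x₁ x₂ u) hω⟩

/-- Shared-noise lifting: for two contractive dynamics driven by (almost surely)
`c`-close realisations of a shared noise source, the joint pushforward couples the two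
transition kernels and keeps the pair inside the relation
`{(a, b) | ‖a - b‖ ≤ c / (1 - L)}` with probability one. -/
theorem shared_noise_coupling
    {E U Ω : Type*} [NormedAddCommGroup E] [NormedSpace ℝ E]
    [MeasurableSpace E] [BorelSpace E] [TopologicalSpace.SeparableSpace E]
    [MeasurableSpace Ω]
    (P : Measure Ω) [IsProbabilityMeasure P]
    (g₁ g₂ : Ω → E) (hg₁ : Measurable g₁) (hg₂ : Measurable g₂)
    (c : ℝ) (hc : 0 ≤ c)
    (hP : P {ω : Ω | ‖g₁ ω - g₂ ω‖ ≤ c} = 1)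
    (L : ℝ) (hL0 : 0 ≤ L) (hL1 : L < 1)
    (f : E × U → E) (hf : ∀ (a b : E) (u : U), ‖f (a, u) - f (b, u)‖ ≤ L * ‖a - b‖)
    (u : U) (x₁ x₂ : E) (hx : ‖x₁ - x₂‖ ≤ c / (1 - L)) :
    IsCoupling (P.map (fun ω => (f (x₁, u) + g₁ ω, f (x₂, u) + g₂ ω)))
      (P.map (fun ω => f (x₁, u) + g₁ ω)) (P.map (fun ω => f (x₂, u) + g₂ ω)) ∧
    P.map (fun ω => (f (x₁, u) + g₁ ω, f (x₂, u) + g₂ ω))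
        {p : E × E | ‖p.1 - p.2‖ ≤ c / (1 - L)} = 1 :=
  shared_noise_coupling_general P g₁ g₂ hg₁ hg₂ c hP L hL0 hL1 f hf u x₁ x₂ hx
end

section
/- Let E be a separable normed vector space with its Borel σ-algebra, U a type, p a Borel probability measure on E with p({e | ‖e‖ ≤ c}) = 1 for some c ≥ 0, and let f : E × U → E satisfy ‖f(a,u) − f(b,u)‖ ≤ L·‖a − b‖ for all a, b ∈ E, u ∈ U, where 0 ≤ L < 1. Fix u ∈ U and x₁, x₂ ∈ E with ‖x₁ − x₂‖ ≤ c/(1−L), and define W as the pushforward of p under e ↦ (f(x₁,u) + e, f(x₂,u)). Then W is a coupling of the pushforward of p under e ↦ f(x₁,u) + e and the Dirac measure at f(x₂,u), and W({(a,b) ∈ E × E | ‖a − b‖ ≤ c/(1−L)}) = 1. -/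
/-!
The noisy successor is `f (x₁, u) + e` and the noiseless one is `f (x₂, u)`, so their distance
is at most `‖f (x₁, u) - f (x₂, u)‖ + ‖e‖ ≤ L ‖x₁ - x₂‖ + c ≤ L · c / (1 - L) + c = c / (1 - L)`
whenever `‖e‖ ≤ c`, which happens with probability one: `c / (1 - L)` is the fixed point of
`r ↦ L r + c`. Pairing the noisy successor with the constant noiseless one is a coupling
with a Dirac second marginal.
-/

open MeasureTheory

theorem isCoupling_map_prodMk_const {α β γ : Type*} [MeasurableSpace α] [MeasurableSpace β]
    [MeasurableSpace γ] (μ : Measure α) [IsProbabilityMeasure μ] {g : α → β}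
    (hg : Measurable g) (b : γ) :
    IsCoupling (μ.map fun x => (g x, b)) (μ.map g) (Measure.dirac b) := by
  have hgb : Measurable fun x => (g x, b) := hg.prodMk measurable_const
  refine ⟨Measure.isProbabilityMeasure_map hgb.aemeasurable, ?_, ?_⟩
  · rw [Measure.map_map measurable_fst hgb]
    rfl
  · rw [Measure.map_map measurable_snd hgb, Function.comp_def, Measure.map_const,
      measure_univ, one_smul]

theorem MeasureTheory.Measure.map_apply_eq_one_of_subset_preimage {α β : Type*} [MeasurableSpace α]
    [MeasurableSpace β] {μ : Measure α} [IsProbabilityMeasure μ] {g : α → β}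
    (hg : AEMeasurable g μ) {s : Set α} {t : Set β} (hs : μ s = 1) (hst : s ⊆ g ⁻¹' t) :
    μ.map g t = 1 := by
  have : IsProbabilityMeasure (μ.map g) := Measure.isProbabilityMeasure_map hg
  refine le_antisymm prob_le_one ?_
  calc 1 = μ s := hs.symm
    _ ≤ μ (g ⁻¹' t) := measure_mono hst
    _ ≤ μ.map g t := Measure.le_map_apply hg t

theorem mul_div_one_sub_add_self {L : ℝ} (hL : L ≠ 1) (c : ℝ) :
    L * (c / (1 - L)) + c = c / (1 - L) := by
  have : 1 - L ≠ 0 := sub_ne_zero.mpr hL.symm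
  field_simp
  ring

theorem norm_add_sub_le_of_contraction {E : Type*} [SeminormedAddCommGroup E]
    {a b e : E} {L c r : ℝ} (hab : ‖a - b‖ ≤ L * r) (he : ‖e‖ ≤ c) (hr : L * r + c ≤ r) :
    ‖a + e - b‖ ≤ r :=
  calc ‖a + e - b‖ = ‖(a - b) + e‖ := by rw [add_sub_right_comm]
    _ ≤ ‖a - b‖ + ‖e‖ := norm_add_le _ _
    _ ≤ r := by linarith

theorem noiseless_coupling_general
    {E U : Type*} [NormedAddCommGroup E]
    [MeasurableSpace E] [BorelSpace E]
    (p : Measure E) [IsProbabilityMeasure p]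
    (c : ℝ) (hp : p {e : E | ‖e‖ ≤ c} = 1)
    (L : ℝ) (hL0 : 0 ≤ L) (hL1 : L < 1)
    (f : E × U → E) (hf : ∀ (a b : E) (u : U), ‖f (a, u) - f (b, u)‖ ≤ L * ‖a - b‖)
    (u : U) (x₁ x₂ : E) (hx : ‖x₁ - x₂‖ ≤ c / (1 - L)) :
    IsCoupling (p.map (fun e => (f (x₁, u) + e, f (x₂, u))))
      (p.map (fun e => f (x₁, u) + e)) (Measure.dirac (f (x₂, u))) ∧
    p.map (fun e => (f (x₁, u) + e, f (x₂, u)))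
        {q : E × E | ‖q.1 - q.2‖ ≤ c / (1 - L)} = 1 := by
  have hnoisy : Measurable fun e : E => f (x₁, u) + e := measurable_const_add _
  refine ⟨isCoupling_map_prodMk_const p hnoisy _, ?_⟩
  refine Measure.map_apply_eq_one_of_subset_preimage
    (hnoisy.prodMk measurable_const).aemeasurable hp fun e he => ?_
  have hstep : ‖f (x₁, u) - f (x₂, u)‖ ≤ L * (c / (1 - L)) :=
    (hf x₁ x₂ u).trans (mul_le_mul_of_nonneg_left hx hL0)
  exact norm_add_sub_le_of_contraction hstep he (mul_div_one_sub_add_self hL1.ne c).le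

/-- Lifting for a noisy model and its noiseless counterpart: if the noise is bounded in
norm by `c` almost surely and the dynamics are `L`-contractive (`L < 1`), then the joint
pushforward couples the noisy transition kernel at `x₁` with the Dirac measure at
`f (x₂, u)` and keeps the pair in `{(a, b) | ‖a - b‖ ≤ c / (1 - L)}` with probability
one. -/
theorem noiseless_coupling
    {E U : Type*} [NormedAddCommGroup E] [NormedSpace ℝ E]
    [MeasurableSpace E] [BorelSpace E] [TopologicalSpace.SeparableSpace E]
    (p : Measure E) [IsProbabilityMeasure p]
    (c : ℝ) (hc : 0 ≤ c) (hp : p {e : E | ‖e‖ ≤ c} = 1)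
    (L : ℝ) (hL0 : 0 ≤ L) (hL1 : L < 1)
    (f : E × U → E) (hf : ∀ (a b : E) (u : U), ‖f (a, u) - f (b, u)‖ ≤ L * ‖a - b‖)
    (u : U) (x₁ x₂ : E) (hx : ‖x₁ - x₂‖ ≤ c / (1 - L)) :
    IsCoupling (p.map (fun e => (f (x₁, u) + e, f (x₂, u))))
      (p.map (fun e => f (x₁, u) + e)) (Measure.dirac (f (x₂, u))) ∧
    p.map (fun e => (f (x₁, u) + e, f (x₂, u)))
        {q : E × E | ‖q.1 - q.2‖ ≤ c / (1 - L)} = 1 :=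
  noiseless_coupling_general p c hp L hL0 hL1 f hf u x₁ x₂ hx
end

section
/- For all a = (a₁,a₂) and b = (b₁,b₂) in ℝ², the integral over ℝ² of (1/(2π))·|exp(−((v₁−a₁)² + (v₂−a₂)²)/2) − exp(−((v₁−b₁)² + (v₂−b₂)²)/2)| with respect to two-dimensional Lebesgue measure is at most (2/√(2π))·(|a₁ − b₁| + |a₂ − b₂|). -/
/-!
The two densities are products of one-dimensional standard Gaussian densities, and
`|f₁ g₁ - f₂ g₂| ≤ |f₁ - f₂| |g₁| + |f₂| |g₁ - g₂|` bounds the L¹ distance of two product densities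
by the sum of the L¹ distances of their factors. In one dimension, the shifts by `a` and by `b` of a
symmetric unimodal density cross at the midpoint of `a` and `b`; since both shifts have the
same mass, their L¹ distance is twice the mass that one of them gains over the other left of the
midpoint, the integral of the density over an interval of length `|a - b|`, hence at most
`2 f(0) |a - b|`. For the standard Gaussian `f(0) = 1 / √(2π)`.
-/

open MeasureTheory Real Set ProbabilityTheory

theorem setIntegral_Iic_comp_sub_right {E : Type*} [NormedAddCommGroup E] [NormedSpace ℝ E]
    (f : ℝ → E) (c a : ℝ) :
    ∫ x in Iic c, f (x - a) = ∫ x in Iic (c - a), f x := by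
  have hpre : (fun x : ℝ => x - a) ⁻¹' Iic (c - a) = Iic c := by
    ext x; simp
  rw [← hpre, (measurePreserving_sub_right volume a).setIntegral_preimage_emb
    (MeasurableEquiv.subRight a).measurableEmbedding]

theorem integral_abs_sub_eq_two_mul_setIntegral {α : Type*} [MeasurableSpace α]
    {μ : Measure α} {u v : α → ℝ} {s : Set α} (hs : MeasurableSet s)
    (hu : Integrable u μ) (hv : Integrable v μ) (huv : ∫ x, u x ∂μ = ∫ x, v x ∂μ)
    (h_mem : ∀ x ∈ s, v x ≤ u x) (h_not_mem : ∀ x ∉ s, u x ≤ v x) :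
    ∫ x, |u x - v x| ∂μ = 2 * ∫ x in s, (u x - v x) ∂μ := by
  have h_in : ∫ x in s, |u x - v x| ∂μ = ∫ x in s, (u x - v x) ∂μ :=
    setIntegral_congr_fun hs fun x hx => abs_of_nonneg (sub_nonneg.2 (h_mem x hx))
  have h_out : ∫ x in sᶜ, |u x - v x| ∂μ = -∫ x in sᶜ, (u x - v x) ∂μ := by
    rw [← integral_neg]
    exact setIntegral_congr_fun hs.compl fun x hx => abs_of_nonpos (sub_nonpos.2 (h_not_mem x hx))
  have h_total : ∫ x in s, (u x - v x) ∂μ + ∫ x in sᶜ, (u x - v x) ∂μ = 0 := by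
    rw [integral_add_compl (f := fun x => u x - v x) hs (hu.sub hv), integral_sub hu hv, huv,
      sub_self]
  rw [← integral_add_compl (f := fun x => |u x - v x|) hs (hu.sub hv).abs, h_in, h_out]
  linarith

theorem integral_abs_comp_sub_sub_comp_sub_le_of_le {f : ℝ → ℝ} (hf : Integrable f)
    (hf_unimodal : ∀ s t, |s| ≤ |t| → f t ≤ f s) {a b : ℝ} (hab : a ≤ b) :
    ∫ x, |f (x - a) - f (x - b)| ≤ 2 * f 0 * (b - a) := by
  set c := (a + b) / 2
  have h_split : ∫ x, |f (x - a) - f (x - b)| = 2 * ∫ x in Iic c, (f (x - a) - f (x - b)) := by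
    refine integral_abs_sub_eq_two_mul_setIntegral measurableSet_Iic (hf.comp_sub_right a)
      (hf.comp_sub_right b) (by rw [integral_sub_right_eq_self, integral_sub_right_eq_self])
      (fun x hx => hf_unimodal _ _ ?_) (fun x hx => hf_unimodal _ _ ?_)
    · have hx : x ≤ (a + b) / 2 := hx
      rw [← sq_le_sq]
      nlinarith [mul_nonneg (sub_nonneg.2 hab) (sub_nonneg.2 hx)]
    · have hx : (a + b) / 2 ≤ x := (not_le.1 hx).le
      rw [← sq_le_sq]
      nlinarith [mul_nonneg (sub_nonneg.2 hab) (sub_nonneg.2 hx)]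
  have h_interval : ∫ x in Iic c, (f (x - a) - f (x - b)) = ∫ t in (c - b)..(c - a), f t := by
    rw [integral_sub (hf.comp_sub_right a).integrableOn (hf.comp_sub_right b).integrableOn,
      setIntegral_Iic_comp_sub_right, setIntegral_Iic_comp_sub_right,
      intervalIntegral.integral_Iic_sub_Iic hf.integrableOn hf.integrableOn]
  have h_bound : ∫ t in (c - b)..(c - a), f t ≤ ∫ _ in (c - b)..(c - a), f 0 :=
    intervalIntegral.integral_mono_on (by linarith) hf.intervalIntegrable
      intervalIntegrable_const fun t _ => hf_unimodal 0 t (by simp)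
  rw [h_split, h_interval]
  simp only [intervalIntegral.integral_const, smul_eq_mul, sub_sub_sub_cancel_left] at h_bound
  linarith

theorem integral_abs_comp_sub_sub_comp_sub_le {f : ℝ → ℝ} (hf : Integrable f)
    (hf_unimodal : ∀ s t, |s| ≤ |t| → f t ≤ f s) (a b : ℝ) :
    ∫ x, |f (x - a) - f (x - b)| ≤ 2 * f 0 * |a - b| := by
  rcases le_total a b with hab | hba
  · rw [abs_sub_comm, abs_of_nonneg (sub_nonneg.2 hab)]
    exact integral_abs_comp_sub_sub_comp_sub_le_of_le hf hf_unimodal hab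
  · simp_rw [abs_sub_comm (f (_ - a))]
    rw [abs_of_nonneg (sub_nonneg.2 hba)]
    exact integral_abs_comp_sub_sub_comp_sub_le_of_le hf hf_unimodal hba

theorem integral_abs_mul_sub_mul_le_prod {α β : Type*} [MeasurableSpace α] [MeasurableSpace β]
    {μ : Measure α} {ν : Measure β} [SFinite μ] [SFinite ν] {f₁ f₂ : α → ℝ} {g₁ g₂ : β → ℝ}
    (hf₁ : Integrable f₁ μ) (hf₂ : Integrable f₂ μ) (hg₁ : Integrable g₁ ν)
    (hg₂ : Integrable g₂ ν) :
    ∫ z, |f₁ z.1 * g₁ z.2 - f₂ z.1 * g₂ z.2| ∂μ.prod ν ≤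
      (∫ x, |f₁ x - f₂ x| ∂μ) * (∫ y, |g₁ y| ∂ν) + (∫ x, |f₂ x| ∂μ) * ∫ y, |g₁ y - g₂ y| ∂ν := by
  have h_pointwise (z : α × β) : |f₁ z.1 * g₁ z.2 - f₂ z.1 * g₂ z.2| ≤
      |f₁ z.1 - f₂ z.1| * |g₁ z.2| + |f₂ z.1| * |g₁ z.2 - g₂ z.2| := by
    rw [← abs_mul, ← abs_mul]
    calc _ = |(f₁ z.1 - f₂ z.1) * g₁ z.2 + f₂ z.1 * (g₁ z.2 - g₂ z.2)| := by ring_nf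
      _ ≤ _ := abs_add_le _ _
  have h_int₁ : Integrable (fun z : α × β => |f₁ z.1 - f₂ z.1| * |g₁ z.2|) (μ.prod ν) :=
    (hf₁.sub hf₂).abs.mul_prod hg₁.abs
  have h_int₂ : Integrable (fun z : α × β => |f₂ z.1| * |g₁ z.2 - g₂ z.2|) (μ.prod ν) :=
    hf₂.abs.mul_prod (hg₁.sub hg₂).abs
  calc _ ≤ ∫ z, |f₁ z.1 - f₂ z.1| * |g₁ z.2| + |f₂ z.1| * |g₁ z.2 - g₂ z.2| ∂μ.prod ν :=
        integral_mono_of_nonneg (.of_forall fun _ => abs_nonneg _) (h_int₁.add h_int₂)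
          (.of_forall h_pointwise)
    _ = _ := by
      rw [integral_add h_int₁ h_int₂, integral_prod_mul (fun x => |f₁ x - f₂ x|) (fun y => |g₁ y|),
        integral_prod_mul (fun x => |f₂ x|) (fun y => |g₁ y - g₂ y|)]

theorem gaussianPDFReal_zero_le_of_abs_le (v : NNReal) {s t : ℝ} (hst : |s| ≤ |t|) :
    gaussianPDFReal 0 v t ≤ gaussianPDFReal 0 v s := by
  have hsq := sq_le_sq.2 hst
  simp only [gaussianPDFReal, sub_zero]
  gcongr

theorem gaussianPDFReal_one_mul_gaussianPDFReal_one (m n x y : ℝ) :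
    gaussianPDFReal m 1 x * gaussianPDFReal n 1 y =
      1 / (2 * π) * exp (-(((x - m) ^ 2 + (y - n) ^ 2) / 2)) := by
  have hsqrt : √(2 * π) * √(2 * π) = 2 * π := Real.mul_self_sqrt (by positivity)
  simp only [gaussianPDFReal, NNReal.coe_one, mul_one]
  rw [mul_mul_mul_comm, ← exp_add, ← mul_inv, hsqrt]
  ring_nf

theorem integral_abs_gaussianPDFReal_sub_le (v : NNReal) (a b : ℝ) :
    ∫ x, |gaussianPDFReal a v x - gaussianPDFReal b v x| ≤ 2 / √(2 * π * v) * |a - b| := by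
  have h := integral_abs_comp_sub_sub_comp_sub_le (integrable_gaussianPDFReal 0 v)
    (fun _ _ => gaussianPDFReal_zero_le_of_abs_le v) a b
  simp only [gaussianPDFReal_sub, zero_add] at h
  convert h using 2
  simp [gaussianPDFReal, div_eq_mul_inv]

theorem integral_abs_gaussianPDFReal_eq_one (m : ℝ) {v : NNReal} (hv : v ≠ 0) :
    ∫ x, |gaussianPDFReal m v x| = 1 := by
  simp_rw [abs_of_nonneg (gaussianPDFReal_nonneg _ _ _)]
  exact integral_gaussianPDFReal_eq_one m hv

/-- L¹-bound between bivariate standard Gaussian densities: the integral over `ℝ²` of the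
absolute difference of the identity-covariance Gaussian densities with means `a` and `b`
is at most `(2 / √(2π)) (|a₁ - b₁| + |a₂ - b₂|)`. -/
theorem gaussian2d_density_L1_bound (a b : ℝ × ℝ) :
    ∫ v : ℝ × ℝ,
        (1 / (2 * Real.pi)) *
          |Real.exp (-(((v.1 - a.1) ^ 2 + (v.2 - a.2) ^ 2) / 2)) -
            Real.exp (-(((v.1 - b.1) ^ 2 + (v.2 - b.2) ^ 2) / 2))|
      ≤ (2 / Real.sqrt (2 * Real.pi)) * (|a.1 - b.1| + |a.2 - b.2|) := by
  have h_product (v : ℝ × ℝ) :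
      1 / (2 * π) * |exp (-(((v.1 - a.1) ^ 2 + (v.2 - a.2) ^ 2) / 2)) -
          exp (-(((v.1 - b.1) ^ 2 + (v.2 - b.2) ^ 2) / 2))| =
        |gaussianPDFReal a.1 1 v.1 * gaussianPDFReal a.2 1 v.2 -
          gaussianPDFReal b.1 1 v.1 * gaussianPDFReal b.2 1 v.2| := by
    rw [gaussianPDFReal_one_mul_gaussianPDFReal_one, gaussianPDFReal_one_mul_gaussianPDFReal_one,
      ← mul_sub, abs_mul, abs_of_pos (show 0 < 1 / (2 * π) by positivity)]
  simp_rw [h_product]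
  rw [Measure.volume_eq_prod]
  refine (integral_abs_mul_sub_mul_le_prod (integrable_gaussianPDFReal _ _)
    (integrable_gaussianPDFReal _ _) (integrable_gaussianPDFReal _ _)
    (integrable_gaussianPDFReal _ _)).trans ?_
  have h₁ := integral_abs_gaussianPDFReal_sub_le 1 a.1 b.1
  have h₂ := integral_abs_gaussianPDFReal_sub_le 1 a.2 b.2
  rw [integral_abs_gaussianPDFReal_eq_one _ one_ne_zero,
    integral_abs_gaussianPDFReal_eq_one _ one_ne_zero]
  push_cast [mul_one] at h₁ h₂
  linarith
end
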